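/- Principle of mathematical induction for natural numbers: if S and T are natural numbers, S ∈ T, Φ(S) holds, and for every X with X ∉ S, X ∈ T, Φ(X) implies Φ(X ∪ {X}), then Φ(T) holds. -/

import Mathlib

/-- Extensional equality of objects: `s = t` iff they have the same members. -/
def eqE {Obj : Type} (mem : Obj → Obj → Prop) (s t : Obj) : Prop :=
  ∀ u, mem u s ↔ mem u t

/-- Inclusion: `a ⊆ b`. -/
def subE {Obj : Type} (mem : Obj → Obj → Prop) (a b : Obj) : Prop :=
  ∀ u, mem u a → mem u b

/-- `w` is the union `⋃ s`. -/
def isUnionOf {Obj : Type} (mem : Obj → Obj → Prop) (w s : Obj) : Prop :=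
  ∀ u, mem u w ↔ ∃ z, mem z s ∧ mem u z

/-- `t` is the successor `s ∪ {s}` of `s` (membership expressed directly). -/
def isSuccOf {Obj : Type} (mem : Obj → Obj → Prop) (t s : Obj) : Prop :=
  ∀ u, mem u t ↔ (mem u s ∨ eqE mem u s)

/-- `S` is an ordinal number with first number `α`:  `S ∉ α` and every
`X ∈ S ∪ {S}` satisfies `X ∈ α ∪ {α}` or (`α ∈ X` and `X = ⋃X ∪ {⋃X}`). -/
def isNat {Obj : Type} (mem : Obj → Obj → Prop) (α S : Obj) : Prop :=
  ¬ mem S α ∧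
  ∀ X, (mem X S ∨ eqE mem X S) →
    (mem X α ∨ eqE mem X α) ∨
    (mem α X ∧ ∃ U, isUnionOf mem U X ∧ isSuccOf mem X U)

/-!
Suppose `Φ T` fails. Among the members `X` of `T ∪ {T}` with `S ∈ X` and `¬ Φ X`, regularity
gives an `∈`-minimal one (none of them is an individual, since `S ∈ X ∈ X` would force `X = S`).
Such an `X` cannot lie in `α ∪ {α}`, as then `S ∈ α`; so `X = U ∪ {U}` with `U ∈ T`,
`U ∉ S` and `S ∈ U ∪ {U}`. Minimality (or `U = S`) gives `Φ U`, and the induction step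
then gives `Φ X`.
-/

section

variable {Obj : Type} {mem : Obj → Obj → Prop}

theorem eqE_refl (a : Obj) : eqE mem a a := fun _ => Iff.rfl

theorem exists_isSuccOf (pairing : ∀ s t, ∃ v, ∀ u, mem u v ↔ (eqE mem u s ∨ eqE mem u t))
    (union : ∀ s, ∃ v, isUnionOf mem v s) (s : Obj) : ∃ w, isSuccOf mem w s := by
  obtain ⟨sing, hsing⟩ := pairing s s
  obtain ⟨pr, hpr⟩ := pairing s sing
  obtain ⟨w, hw⟩ := union pr
  refine ⟨w, fun u => ⟨fun hu => ?_, ?_⟩⟩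
  · obtain ⟨z, hz, huz⟩ := (hw u).1 hu
    rcases (hpr z).1 hz with hzs | hzsing
    · exact Or.inl ((hzs u).1 huz)
    · exact ((hsing u).1 ((hzsing u).1 huz)).elim Or.inr Or.inr
  · rintro (hus | hus)
    · exact (hw u).2 ⟨s, (hpr s).2 (Or.inl (eqE_refl s)), hus⟩
    · exact (hw u).2 ⟨sing, (hpr sing).2 (Or.inr (eqE_refl sing)), (hsing u).2 (Or.inl hus)⟩

theorem exists_mem_minimal
    (regularity : ∀ s, (∃ v, mem v s ∧ ¬ mem v v) →
      ∃ v, mem v s ∧ ¬ mem v v ∧ ∀ u, mem u s → ¬ mem u u → ¬ mem u v)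
    (spec : ∀ (Φ : Obj → Prop) (s : Obj), (∃ u, mem u s ∧ Φ u) →
      ∃ v, ∀ u, mem u v ↔ (mem u s ∧ Φ u))
    (W : Obj) (P : Obj → Prop) (hP : ∀ u, mem u W → P u → ¬ mem u u)
    (hne : ∃ u, mem u W ∧ P u) :
    ∃ v, mem v W ∧ P v ∧ ∀ u, mem u W → P u → ¬ mem u v := by
  obtain ⟨B, hB⟩ := spec P W hne
  obtain ⟨u₀, hu₀W, hu₀⟩ := hne
  obtain ⟨v, hvB, -, hmin⟩ :=
    regularity B ⟨u₀, (hB u₀).2 ⟨hu₀W, hu₀⟩, hP u₀ hu₀W hu₀⟩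
  obtain ⟨hvW, hv⟩ := (hB v).1 hvB
  exact ⟨v, hvW, hv, fun u huW hu => hmin u ((hB u).2 ⟨huW, hu⟩) (hP u huW hu)⟩

theorem mem_self_of_eqE (subst : ∀ s t v, eqE mem s t → mem t v → mem s v)
    {x p : Obj} (hxp : eqE mem x p) (hp : mem p p) : mem x x :=
  (hxp x).2 (subst x p p hxp hp)

theorem mem_of_mem_of_mem_individual (subst : ∀ s t v, eqE mem s t → mem t v → mem s v)
    (indiv : ∀ p s, mem s p → mem p p → eqE mem s p)
    {s x a : Obj} (hsx : mem s x) (hxx : mem x x) (hxa : mem x a) : mem s a :=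
  subst s x a (indiv x s hsx hxx) hxa

def IsTransitive (mem : Obj → Obj → Prop) (T : Obj) : Prop :=
  ∀ a b, mem a b → mem b T → mem a T

theorem isTransitive_of_isSuccOf_union {U T : Obj} (hU : isUnionOf mem U T)
    (hT : isSuccOf mem T U) : IsTransitive mem T :=
  fun a b hab hbT => (hT a).2 (Or.inl ((hU a).2 ⟨b, hbT, hab⟩))

theorem mem_of_mem_of_le_first (subst : ∀ s t v, eqE mem s t → mem t v → mem s v)
    (indiv : ∀ p s, mem s p → mem p p → eqE mem s p) {α : Obj}
    (hαind : ∀ x, mem x α → mem x x) {S X : Obj} (hX : mem X α ∨ eqE mem X α)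
    (hSX : mem S X) : mem S α := by
  rcases hX with hXα | hXα
  · exact mem_of_mem_of_mem_individual subst indiv hSX (hαind X hXα) hXα
  · exact (hXα S).1 hSX

namespace isNat

variable {α S T : Obj}

theorem not_mem_self (indiv : ∀ p s, mem s p → mem p p → eqE mem s p)
    (hS : isNat mem α S) : ¬ mem S S := by
  intro hSS
  rcases hS.2 S (Or.inr (eqE_refl S)) with (hSα | hSα) | ⟨hαS, -⟩
  · exact hS.1 hSα
  · exact hS.1 ((hSα S).1 hSS)
  · exact hS.1 ((indiv S α hαS hSS S).2 hSS)

theorem isTransitive_of_not_le (hT : isNat mem α T) (hTα : ¬ (mem T α ∨ eqE mem T α)) :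
    IsTransitive mem T := by
  obtain ⟨-, U, hU, hTU⟩ := (hT.2 T (Or.inr (eqE_refl T))).resolve_left hTα
  exact isTransitive_of_isSuccOf_union hU hTU

theorem not_mem_of_le (subst : ∀ s t v, eqE mem s t → mem t v → mem s v)
    (indiv : ∀ p s, mem s p → mem p p → eqE mem s p) (hαind : ∀ x, mem x α → mem x x)
    (hS : isNat mem α S) {U : Obj} (hSU : mem S U ∨ eqE mem S U) : ¬ mem U S := by
  intro hUS
  rcases hSU with hSU | hSU
  · by_cases hSα : mem S α ∨ eqE mem S α
    · have hUα := mem_of_mem_of_le_first subst indiv hαind hSα hUS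
      exact hS.1 (mem_of_mem_of_le_first subst indiv hαind (Or.inl hUα) hSU)
    · exact hS.not_mem_self indiv (hS.isTransitive_of_not_le hSα S U hSU hUS)
  · exact hS.not_mem_self indiv (subst S U S hSU hUS)

theorem exists_pred (subst : ∀ s t v, eqE mem s t → mem t v → mem s v)
    (indiv : ∀ p s, mem s p → mem p p → eqE mem s p) (hαind : ∀ x, mem x α → mem x x)
    (hS : isNat mem α S) (hT : isNat mem α T) (hST : mem S T) {X : Obj}
    (hX : mem X T ∨ eqE mem X T) (hSX : mem S X) :
    ∃ U, isSuccOf mem X U ∧ mem U T ∧ ¬ mem U S ∧ (mem S U ∨ eqE mem S U) := by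
  have hTα : ¬ (mem T α ∨ eqE mem T α) :=
    fun h => hS.1 (mem_of_mem_of_le_first subst indiv hαind h hST)
  have hXα : ¬ (mem X α ∨ eqE mem X α) :=
    fun h => hS.1 (mem_of_mem_of_le_first subst indiv hαind h hSX)
  obtain ⟨-, U, -, hXU⟩ := (hT.2 X hX).resolve_left hXα
  have hUX : mem U X := (hXU U).2 (Or.inr (eqE_refl U))
  have hUT : mem U T := hX.elim (hT.isTransitive_of_not_le hTα U X hUX) (fun h => (h U).1 hUX)
  have hSU := (hXU S).1 hSX
  exact ⟨U, hXU, hUT, hS.not_mem_of_le subst indiv hαind hSU, hSU⟩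

end isNat

end

theorem nat_induction_general {Obj : Type} (mem : Obj → Obj → Prop)
    (subst : ∀ s t v, eqE mem s t → mem t v → mem s v)
    (indiv : ∀ p s, mem s p → mem p p → eqE mem s p)
    (pairing : ∀ s t, ∃ v, ∀ u, mem u v ↔ (eqE mem u s ∨ eqE mem u t))
    (union : ∀ s, ∃ v, isUnionOf mem v s)
    (regularity : ∀ s, (∃ v, mem v s ∧ ¬ mem v v) →
      ∃ v, mem v s ∧ ¬ mem v v ∧ ∀ u, mem u s → ¬ mem u u → ¬ mem u v)
    (spec : ∀ (Φ : Obj → Prop) (s : Obj), (∃ u, mem u s ∧ Φ u) →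
      ∃ v, ∀ u, mem u v ↔ (mem u s ∧ Φ u))
    (p q α : Obj) (hp : mem p p) (hq : mem q q)
    (hα : ∀ u, mem u α ↔ (eqE mem u p ∨ eqE mem u q))
    (Φ : Obj → Prop)
    (Φext : ∀ a b, eqE mem a b → Φ a → Φ b)
    (S T : Obj) (hS : isNat mem α S) (hT : isNat mem α T)
    (hST : mem S T) (hΦS : Φ S)
    (hstep : ∀ X SX, ¬ mem X S → mem X T → Φ X → isSuccOf mem SX X → Φ SX) :
    Φ T := by
  by_contra hΦT
  have hαind : ∀ x, mem x α → mem x x := fun x hx =>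
    ((hα x).1 hx).elim (mem_self_of_eqE subst · hp) (mem_self_of_eqE subst · hq)
  obtain ⟨W, hW⟩ := exists_isSuccOf pairing union T
  have hTW : mem T W := (hW T).2 (Or.inr (eqE_refl T))
  obtain ⟨X, hXW, ⟨hSX, hΦX⟩, hmin⟩ := exists_mem_minimal regularity spec W
    (fun X => mem S X ∧ ¬ Φ X)
    (fun u _ ⟨hSu, hΦu⟩ huu => hΦu (Φext S u (indiv u S hSu huu) hΦS)) ⟨T, hTW, hST, hΦT⟩
  obtain ⟨U, hXU, hUT, hUS, hSU⟩ := hS.exists_pred subst indiv hαind hT hST ((hW X).1 hXW) hSX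
  have hΦU : Φ U := by
    rcases hSU with hSU | hSU
    · by_contra hΦU
      exact hmin U ((hW U).2 (Or.inl hUT)) ⟨hSU, hΦU⟩ ((hXU U).2 (Or.inr (eqE_refl U)))
    · exact Φext S U hSU hΦS
  exact hΦX (hstep U X hUS hUT hΦU hXU)

/-- The principle of mathematical induction for natural numbers. -/
theorem nat_induction {Obj : Type} (mem : Obj → Obj → Prop)
    (subst : ∀ s t v, eqE mem s t → mem t v → mem s v)
    (indiv : ∀ p s, mem s p → mem p p → eqE mem s p)
    (pairing : ∀ s t, ∃ v, ∀ u, mem u v ↔ (eqE mem u s ∨ eqE mem u t))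
    (union : ∀ s, ∃ v, isUnionOf mem v s)
    (regularity : ∀ s, (∃ v, mem v s ∧ ¬ mem v v) →
      ∃ v, mem v s ∧ ¬ mem v v ∧ ∀ u, mem u s → ¬ mem u u → ¬ mem u v)
    (spec : ∀ (Φ : Obj → Prop) (s : Obj), (∃ u, mem u s ∧ Φ u) →
      ∃ v, ∀ u, mem u v ↔ (mem u s ∧ Φ u))
    (nonemptyAx : ∀ t : Obj, ∃ u, mem u t)
    (p q α : Obj) (hp : mem p p) (hq : mem q q)
    (hα : ∀ u, mem u α ↔ (eqE mem u p ∨ eqE mem u q))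
    (Φ : Obj → Prop)
    (Φext : ∀ a b, eqE mem a b → Φ a → Φ b)
    (S T : Obj) (hS : isNat mem α S) (hT : isNat mem α T)
    (hST : mem S T) (hΦS : Φ S)
    (hstep : ∀ X SX, ¬ mem X S → mem X T → Φ X → isSuccOf mem SX X → Φ SX) :
    Φ T :=
  nat_induction_general mem subst indiv pairing union regularity spec p q α hp hq hα Φ Φext S T hS
    hT hST hΦS hstep
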